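/- arXiv:2205.10099 — 2 statements merged into one kernel-verified Lean document; each statement's English description precedes it below -/
import Mathlib

section
/- Let K be a finite simplicial complex such that there exists a continuous injective map f: |K'| → ℝ^d. Then f is faithful. If moreover f is affine on each simplex, then K is d-representable. -/
open scoped BigOperators

noncomputable section

variable {V : Type*} [Fintype V] [DecidableEq V]

def IsComplex (K : Finset (Finset V)) : Prop :=
  ∅ ∈ K ∧ (∀ v : V, {v} ∈ K) ∧ ∀ F ∈ K, ∀ G ⊆ F, G ∈ K

def facets (K : Finset (Finset V)) : Finset (Finset V) :=
  K.filter fun J => ∀ J' ∈ K, J ⊆ J' → J = J'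

def contV (K : Finset (Finset V)) (i : V) : Finset (Finset V) :=
  (facets K).filter fun J => i ∈ J

def dual (K : Finset (Finset V)) : Finset (Finset (Finset V)) :=
  (facets K).powerset.filter fun α => (α.inf id).Nonempty

def geomFace {W : Type*} [Fintype W] (F : Finset W) : Set (W → ℝ) :=
  {x | (∀ w, 0 ≤ x w) ∧ (∑ w, x w) = 1 ∧ ∀ w, x w ≠ 0 → w ∈ F}

def geom {W : Type*} [Fintype W] (L : Finset (Finset W)) : Set (W → ℝ) :=
  ⋃ F ∈ L, geomFace F

def supp {W : Type*} [Fintype W] [DecidableEq W] (x : W → ℝ) : Finset W :=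
  Finset.univ.filter fun w => x w ≠ 0

def Faithful {d : ℕ} (K : Finset (Finset V))
    (f : (Finset V → ℝ) → EuclideanSpace ℝ (Fin d)) : Prop :=
  ∀ I : Finset V, (⋂ i ∈ I, f '' geomFace (contV K i)).Nonempty → I ∈ K

def affExt {W : Type*} [Fintype W] {E : Type*} [AddCommGroup E] [Module ℝ E]
    (p : W → E) (x : W → ℝ) : E := ∑ w, x w • p w

def Hhat (K : Finset (Finset V)) : Set ((Finset V → ℝ) × (Finset V → ℝ)) :=
  {z | z.1 ∈ geom (dual K) ∧ z.2 ∈ geom (dual K) ∧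
    ((supp z.1).inf id ∪ (supp z.2).inf id) ∉ K}

def Matousek (d : ℕ) (K : Finset (Finset V)) : Prop :=
  ∃ g : Hhat K → EuclideanSpace ℝ (Fin d),
    Continuous g ∧ (∀ z, ‖g z‖ = 1) ∧
    ∀ (x y : Finset V → ℝ) (hxy : (x, y) ∈ Hhat K) (hyx : (y, x) ∈ Hhat K),
      g ⟨(y, x), hyx⟩ = - g ⟨(x, y), hxy⟩

def Representable (d : ℕ) (K : Finset (Finset V)) : Prop :=
  ∃ C : V → Set (EuclideanSpace ℝ (Fin d)),
    (∀ i, Convex ℝ (C i)) ∧ ∀ I : Finset V, I ∈ K ↔ (⋂ i ∈ I, C i).Nonempty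

def dimOf {W : Type*} [Fintype W] [DecidableEq W] (L : Finset (Finset W)) : ℕ :=
  (L.sup Finset.card) - 1

/-!
If `f` is injective on `|K'|`, then `⋂ i ∈ I, f '' |Cont_i| = f '' ⋂ i ∈ I, |Cont_i|`, and a point
of `⋂ i ∈ I, |Cont_i|` has some facet `J` in its support; that facet lies in every `Cont_i`, so
`I ⊆ J ∈ K`. If `f` is affine, each `f '' |Cont_i|` is a linear image of a simplex, hence convex;
conversely, for `I ∈ K` the vertex of `|K'|` given by a facet `J ⊇ I` lies in every `|Cont_i|`,
so these convex sets have nerve `K`.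
-/

section Facets

variable {K : Finset (Finset V)}

lemma mem_facets_of_maximal {J : Finset V} (hJ : Maximal (· ∈ K) J) : J ∈ facets K :=
  Finset.mem_filter.2 ⟨hJ.prop, fun _ hJ' hsub => (hJ.eq_of_ge hJ' hsub).symm⟩

lemma exists_facet_superset {F : Finset V} (hF : F ∈ K) : ∃ J ∈ facets K, F ⊆ J := by
  obtain ⟨J, hFJ, hJ⟩ := K.exists_le_maximal hF
  exact ⟨J, mem_facets_of_maximal hJ, hFJ⟩

lemma facets_subset : facets K ⊆ K :=
  Finset.filter_subset _ _

lemma mem_contV_iff {i : V} {J : Finset V} : J ∈ contV K i ↔ J ∈ facets K ∧ i ∈ J :=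
  Finset.mem_filter

lemma contV_mem_dual (i : V) : contV K i ∈ dual K := by
  refine Finset.mem_filter.2 ⟨Finset.mem_powerset.2 (Finset.filter_subset _ _), i, ?_⟩
  exact Finset.singleton_subset_iff.1 <| Finset.le_inf fun J hJ =>
    Finset.singleton_subset_iff.2 (mem_contV_iff.1 hJ).2

lemma geomFace_contV_subset_geom_dual (i : V) : geomFace (contV K i) ⊆ geom (dual K) :=
  Set.subset_biUnion_of_mem (u := geomFace) (contV_mem_dual i)

end Facets

section GeomFace

variable {W : Type*} [Fintype W]

lemma geomFace_eq_stdSimplex_inter (F : Finset W) :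
    geomFace F = stdSimplex ℝ W ∩ ⋂ w ∉ F, {x | x w = 0} := by
  ext x
  simp only [geomFace, stdSimplex, Set.mem_inter_iff, Set.mem_iInter, Set.mem_ofPred_eq]
  refine and_assoc.symm.trans (and_congr_right fun _ => forall_congr' fun w => ?_)
  exact not_imp_comm

lemma convex_geomFace (F : Finset W) : Convex ℝ (geomFace F) := by
  rw [geomFace_eq_stdSimplex_inter]
  exact (convex_stdSimplex ℝ W).inter <| convex_iInter₂ fun w _ =>
    convex_hyperplane (LinearMap.proj (R := ℝ) (φ := fun _ : W => ℝ) w).isLinear 0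

lemma single_mem_geomFace [DecidableEq W] {F : Finset W} {w : W} (hw : w ∈ F) :
    Pi.single w 1 ∈ geomFace F := by
  refine ⟨(single_mem_stdSimplex ℝ w).1, (single_mem_stdSimplex ℝ w).2, fun v hv => ?_⟩
  obtain rfl : v = w := by_contra fun h => hv (Pi.single_eq_of_ne h _)
  exact hw

lemma exists_ne_zero_of_mem_geomFace {F : Finset W} {x : W → ℝ} (hx : x ∈ geomFace F) :
    ∃ w, x w ≠ 0 := by
  by_contra! h
  simpa [h] using hx.2.1

end GeomFace

variable {K : Finset (Finset V)}

lemma mem_of_mem_iInter_geomFace_contV (hK : IsComplex K) {I : Finset V} (hI : I.Nonempty)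
    {x : Finset V → ℝ} (hx : x ∈ ⋂ i ∈ I, geomFace (contV K i)) : I ∈ K := by
  rw [Set.mem_iInter₂] at hx
  obtain ⟨i₀, hi₀⟩ := hI
  obtain ⟨J, hJ⟩ := exists_ne_zero_of_mem_geomFace (hx i₀ hi₀)
  have hJK : J ∈ K := facets_subset (mem_contV_iff.1 ((hx i₀ hi₀).2.2 J hJ)).1
  exact hK.2.2 J hJK I fun i hi => (mem_contV_iff.1 ((hx i hi).2.2 J hJ)).2

lemma faithful_of_injOn {d : ℕ} (hK : IsComplex K) {f : (Finset V → ℝ) → EuclideanSpace ℝ (Fin d)}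
    (hinj : Set.InjOn f (geom (dual K))) : Faithful K f := by
  intro I hI
  obtain rfl | hIne := I.eq_empty_or_nonempty
  · exact hK.1
  have hinj' : Set.InjOn f (⋃ i ∈ I, geomFace (contV K i)) :=
    hinj.mono (Set.iUnion₂_subset fun i _ => geomFace_contV_subset_geom_dual i)
  rw [← hinj'.image_biInter_eq hIne] at hI
  obtain ⟨_, x, hx, rfl⟩ := hI
  exact mem_of_mem_iInter_geomFace_contV hK hIne hx

lemma iInter_geomFace_contV_nonempty {I : Finset V} (hI : I ∈ K) :
    (⋂ i ∈ I, geomFace (contV K i)).Nonempty := by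
  obtain ⟨J, hJ, hIJ⟩ := exists_facet_superset hI
  exact ⟨Pi.single J 1, Set.mem_iInter₂.2 fun i hi =>
    single_mem_geomFace (mem_contV_iff.2 ⟨hJ, hIJ hi⟩)⟩

lemma convex_image_geomFace_contV {E : Type*} [AddCommGroup E] [Module ℝ E]
    {f : (Finset V → ℝ) → E} {p : Finset V → E} (hp : ∀ x ∈ geom (dual K), f x = affExt p x)
    (i : V) : Convex ℝ (f '' geomFace (contV K i)) := by
  rw [Set.image_congr fun x hx => hp x (geomFace_contV_subset_geom_dual i hx)]
  exact (convex_geomFace _).linear_image (Fintype.linearCombination ℝ p)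

theorem stmt11_general {d : ℕ} (K : Finset (Finset V)) (hK : IsComplex K)
    (f : (Finset V → ℝ) → EuclideanSpace ℝ (Fin d))
    (hinj : Set.InjOn f (geom (dual K))) :
    Faithful K f ∧
    ∀ p : Finset V → EuclideanSpace ℝ (Fin d),
      (∀ x ∈ geom (dual K), f x = affExt p x) → Representable d K := by
  have hfaithful := faithful_of_injOn hK hinj
  refine ⟨hfaithful, fun p hp => ⟨fun i => f '' geomFace (contV K i),
    convex_image_geomFace_contV hp, fun I => ⟨fun hI => ?_, hfaithful I⟩⟩⟩
  exact ((iInter_geomFace_contV_nonempty hI).image f).mono (Set.image_iInter₂_subset _ f)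

/-- a continuous injective map `|K'| → ℝ^d` is faithful; if it is
moreover affine, then `K` is `d`-representable. -/
theorem stmt11 {d : ℕ} (K : Finset (Finset V)) (hK : IsComplex K)
    (f : (Finset V → ℝ) → EuclideanSpace ℝ (Fin d))
    (hcont : ContinuousOn f (geom (dual K)))
    (hinj : Set.InjOn f (geom (dual K))) :
    Faithful K f ∧
    ∀ p : Finset V → EuclideanSpace ℝ (Fin d),
      (∀ x ∈ geom (dual K), f x = affExt p x) → Representable d K :=
  stmt11_general K hK f hinj
end
end

section
/- Every finite simplicial complex K is (2·dim K' + 1)-representable, where K' is the dual complex (the nerve of the facets of K). -/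
open scoped BigOperators

noncomputable section

variable {V : Type*} [Fintype V] [DecidableEq V]

/-- Vandermonde-type lemma via Lagrange interpolation. -/
lemma vand_aux {W : Type*} [DecidableEq W] (t : W → ℝ) (ht : Function.Injective t)
    (s : Finset W) (n : ℕ) (hcard : s.card ≤ n + 1)
    (c : W → ℝ)
    (hzero : ∀ j ≤ n, ∑ w ∈ s, c w * t w ^ j = 0) :
    ∀ w ∈ s, c w = 0 := by
  intro w0 hw0
  set P := Lagrange.basis s t w0 with hP
  have hinj : Set.InjOn t s := ht.injOn
  have hdeg : P.natDegree < n + 1 := by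
    rw [hP, Lagrange.natDegree_basis hinj hw0]
    omega
  have h1 : ∑ w ∈ s, c w * P.eval (t w) = c w0 := by
    rw [Finset.sum_eq_single w0]
    · rw [Lagrange.eval_basis_self hinj hw0, mul_one]
    · intro w hw hne
      rw [Lagrange.eval_basis_of_ne (Ne.symm hne) hw, mul_zero]
    · intro h; exact absurd hw0 h
  have h2 : ∑ w ∈ s, c w * P.eval (t w) = 0 := by
    calc ∑ w ∈ s, c w * P.eval (t w)
        = ∑ w ∈ s, ∑ j ∈ Finset.range (n + 1), P.coeff j * (c w * t w ^ j) := by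
          refine Finset.sum_congr rfl fun w _ => ?_
          rw [Polynomial.eval_eq_sum_range' hdeg, Finset.mul_sum]
          exact Finset.sum_congr rfl fun j _ => by ring
      _ = ∑ j ∈ Finset.range (n + 1), P.coeff j * ∑ w ∈ s, c w * t w ^ j := by
          rw [Finset.sum_comm]
          exact Finset.sum_congr rfl fun j _ => (Finset.mul_sum _ _ _).symm
      _ = 0 := Finset.sum_eq_zero fun j hj => by
          rw [hzero j (Nat.lt_succ_iff.mp (Finset.mem_range.mp hj)), mul_zero]
  rw [h2] at h1
  exact h1.symm

/-- The affine "moment curve" map. -/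
def mapF {W : Type*} [Fintype W] (d : ℕ) (t : W → ℝ) (x : W → ℝ) :
    EuclideanSpace ℝ (Fin d) :=
  WithLp.toLp 2 (fun k => ∑ w, x w * t w ^ ((k : ℕ) + 1))

lemma sum_eq_one_of_geomFace {W : Type*} [Fintype W] {F : Finset W} {x : W → ℝ}
    (hx : x ∈ geomFace F) : (∑ w, x w) = 1 := hx.2.1

lemma supp_nonempty {W : Type*} [Fintype W] [DecidableEq W] {F : Finset W} {x : W → ℝ}
    (hx : x ∈ geomFace F) : (supp x).Nonempty := by
  by_contra h
  rw [Finset.not_nonempty_iff_eq_empty] at h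
  have : ∀ w, x w = 0 := by
    intro w
    by_contra hw
    have : w ∈ supp x := Finset.mem_filter.2 ⟨Finset.mem_univ w, hw⟩
    rw [h] at this
    exact absurd this (Finset.notMem_empty w)
  have h1 := hx.2.1
  rw [Finset.sum_eq_zero (fun w _ => this w)] at h1
  norm_num at h1

lemma supp_subset {W : Type*} [Fintype W] [DecidableEq W] {F : Finset W} {x : W → ℝ}
    (hx : x ∈ geomFace F) : supp x ⊆ F := by
  intro w hw
  exact hx.2.2 w (Finset.mem_filter.1 hw).2

/-- Every face of a complex is contained in a facet. -/
lemma exists_facet (K : Finset (Finset V)) (F : Finset V) (hF : F ∈ K) :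
    ∃ J ∈ facets K, F ⊆ J := by
  have hne : (K.filter fun J => F ⊆ J).Nonempty := ⟨F, Finset.mem_filter.2 ⟨hF, subset_rfl⟩⟩
  obtain ⟨J, hJ, hmax⟩ := Finset.exists_max_image _ Finset.card hne
  rw [Finset.mem_filter] at hJ
  refine ⟨J, Finset.mem_filter.2 ⟨hJ.1, fun J' hJ' hsub => ?_⟩, hJ.2⟩
  have : J' ∈ K.filter fun J => F ⊆ J :=
    Finset.mem_filter.2 ⟨hJ', hJ.2.trans hsub⟩
  exact Finset.eq_of_subset_of_card_le hsub (hmax J' this)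

lemma supp_mem_dual {i : V} {K : Finset (Finset V)} {x : Finset V → ℝ}
    (hx : x ∈ geomFace (contV K i)) : supp x ∈ dual K := by
  have hsub : supp x ⊆ contV K i := supp_subset hx
  have hne : (supp x).Nonempty := supp_nonempty hx
  refine Finset.mem_filter.2 ⟨Finset.mem_powerset.2 fun J hJ => (Finset.mem_filter.1 (hsub hJ)).1, ?_⟩
  refine ⟨i, ?_⟩
  rw [← Finset.inf'_eq_inf hne, Finset.mem_inf']
  intro J hJ
  exact (Finset.mem_filter.1 (hsub hJ)).2

lemma card_le_of_mem_dual {K : Finset (Finset V)} {s : Finset (Finset V)}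
    (hs : s ∈ dual K) : s.card ≤ dimOf (dual K) + 1 := by
  have h1 : s.card ≤ (dual K).sup Finset.card := Finset.le_sup hs
  unfold dimOf
  omega

/-- Key injectivity lemma. -/
lemma mapF_inj {K : Finset (Finset V)} (t : Finset V → ℝ) (ht : Function.Injective t)
    {x y : Finset V → ℝ}
    (hx : supp x ∈ dual K) (hy : supp y ∈ dual K)
    (hxs : (∑ w, x w) = 1) (hys : (∑ w, y w) = 1)
    (hfe : mapF (2 * dimOf (dual K) + 1) t x = mapF (2 * dimOf (dual K) + 1) t y) :
    x = y := by
  set m := dimOf (dual K) with hm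
  set s : Finset (Finset V) := supp x ∪ supp y with hs
  have hcard : s.card ≤ (2 * m + 1) + 1 := by
    have h1 := card_le_of_mem_dual hx
    have h2 := card_le_of_mem_dual hy
    have h3 : s.card ≤ (supp x).card + (supp y).card :=
      hs ▸ Finset.card_union_le (supp x) (supp y)
    omega
  have hvanish : ∀ w ∉ s, (x w - y w) * 1 = 0 := by
    intro w hw
    rw [hs, Finset.mem_union, not_or] at hw
    have hx0 : x w = 0 := by
      by_contra h
      exact hw.1 (Finset.mem_filter.2 ⟨Finset.mem_univ w, h⟩)
    have hy0 : y w = 0 := by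
      by_contra h
      exact hw.2 (Finset.mem_filter.2 ⟨Finset.mem_univ w, h⟩)
    rw [hx0, hy0]; ring
  have huniv : ∀ j : ℕ, ∑ w ∈ s, (x w - y w) * t w ^ j = ∑ w, (x w - y w) * t w ^ j := by
    intro j
    refine Finset.sum_subset (Finset.subset_univ s) fun w _ hw => ?_
    rw [hs, Finset.mem_union, not_or] at hw
    have hx0 : x w = 0 := by
      by_contra h
      exact hw.1 (Finset.mem_filter.2 ⟨Finset.mem_univ w, h⟩)
    have hy0 : y w = 0 := by
      by_contra h
      exact hw.2 (Finset.mem_filter.2 ⟨Finset.mem_univ w, h⟩)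
    rw [hx0, hy0]; ring
  have hzero : ∀ j ≤ 2 * m + 1, ∑ w ∈ s, (x w - y w) * t w ^ j = 0 := by
    intro j hj
    rw [huniv j]
    rcases Nat.eq_zero_or_pos j with hj0 | hjpos
    · subst hj0
      simp only [pow_zero, mul_one]
      rw [Finset.sum_sub_distrib, hxs, hys, sub_self]
    · obtain ⟨k, rfl⟩ : ∃ k, j = k + 1 := ⟨j - 1, by omega⟩
      have hklt : k < 2 * m + 1 := by omega
      have := congrFun (congrArg WithLp.ofLp hfe) ⟨k, hklt⟩
      simp only [mapF] at this
      have heq : ∑ w, x w * t w ^ (k + 1) = ∑ w, y w * t w ^ (k + 1) := this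
      simp only [sub_mul]
      rw [Finset.sum_sub_distrib, heq, sub_self]
  have hall : ∀ w ∈ s, x w - y w = 0 :=
    vand_aux t ht s (2 * m + 1) hcard (fun w => x w - y w) hzero
  funext w
  by_cases hw : w ∈ s
  · have := hall w hw; linarith
  · have := hvanish w hw
    rw [mul_one] at this
    linarith

/-- every finite simplicial complex `K` is
`(2 · dim K' + 1)`-representable. -/
theorem stmt12 (K : Finset (Finset V)) (hK : IsComplex K) :
    Representable (2 * dimOf (dual K) + 1) K := by
  classical
  set d := 2 * dimOf (dual K) + 1 with hd
  set t : Finset V → ℝ := fun w => ((Fintype.equivFin (Finset V) w : ℕ) : ℝ) with htdef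
  have ht : Function.Injective t := by
    intro a b hab
    have : ((Fintype.equivFin (Finset V) a : ℕ) : ℝ)
        = ((Fintype.equivFin (Finset V) b : ℕ) : ℝ) := hab
    have := Nat.cast_injective (R := ℝ) this
    have := Fin.val_injective this
    exact (Fintype.equivFin (Finset V)).injective this
  refine ⟨fun i => mapF d t '' geomFace (contV K i), ?_, ?_⟩
  · -- convexity
    intro i
    rintro u ⟨x, hx, rfl⟩ v ⟨y, hy, rfl⟩ a b ha hb hab
    refine ⟨fun w => a * x w + b * y w, ?_, ?_⟩
    · refine ⟨fun w => by have h1 := hx.1 w; have h2 := hy.1 w; positivity, ?_, ?_⟩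
      · rw [Finset.sum_add_distrib]
        rw [← Finset.mul_sum, ← Finset.mul_sum, hx.2.1, hy.2.1]
        linarith
      · intro w hw
        by_cases hxw : x w = 0
        · by_cases hyw : y w = 0
          · exact absurd (show (fun w => a * x w + b * y w) w = 0 by
                simp only [hxw, hyw]; ring) hw
          · exact hy.2.2 w hyw
        · exact hx.2.2 w hxw
    · ext k
      show (∑ w, (a * x w + b * y w) * t w ^ ((k : ℕ) + 1))
          = a • (∑ w, x w * t w ^ ((k : ℕ) + 1)) + b • (∑ w, y w * t w ^ ((k : ℕ) + 1))
      simp only [smul_eq_mul, Finset.mul_sum]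
      rw [← Finset.sum_add_distrib]
      exact Finset.sum_congr rfl fun w _ => by ring
  · -- the nerve condition
    intro I
    constructor
    · -- I ∈ K → intersection nonempty
      intro hI
      obtain ⟨J, hJf, hJsub⟩ := exists_facet K I hI
      set δ : Finset V → ℝ := fun J' => if J' = J then (1 : ℝ) else 0 with hδ
      have hδmem : ∀ i ∈ I, δ ∈ geomFace (contV K i) := by
        intro i hi
        refine ⟨fun w => by rw [hδ]; dsimp only; split <;> norm_num, ?_, ?_⟩
        · rw [hδ]
          simp [Finset.sum_ite_eq']
        · intro w hw
          have : w = J := by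
            by_contra h
            rw [hδ] at hw
            simp only [h, if_false] at hw
            exact hw rfl
          subst this
          exact Finset.mem_filter.2 ⟨hJf, hJsub hi⟩
      refine ⟨mapF d t δ, Set.mem_iInter₂.2 fun i hi => ⟨δ, hδmem i hi, rfl⟩⟩
    · -- intersection nonempty → I ∈ K
      rintro ⟨p, hp⟩
      rw [Set.mem_iInter₂] at hp
      rcases Finset.eq_empty_or_nonempty I with hIe | ⟨i0, hi0⟩
      · subst hIe; exact hK.1
      obtain ⟨x0, hx0mem, hx0⟩ := hp i0 hi0
      have hkey : ∀ i ∈ I, supp x0 ⊆ contV K i := by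
        intro i hi
        obtain ⟨x, hxmem, hxf⟩ := hp i hi
        have : x = x0 := by
          apply mapF_inj t ht (supp_mem_dual hxmem) (supp_mem_dual hx0mem)
            (sum_eq_one_of_geomFace hxmem) (sum_eq_one_of_geomFace hx0mem)
          rw [hxf, hx0]
        rw [← this]
        exact supp_subset hxmem
      obtain ⟨J, hJ⟩ := supp_nonempty hx0mem
      have hJK : J ∈ K := by
        have := hkey i0 hi0 hJ
        exact (Finset.mem_filter.1 (Finset.mem_filter.1 this).1).1
      have hIJ : I ⊆ J := by
        intro i hi
        exact (Finset.mem_filter.1 (hkey i hi hJ)).2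
      exact hK.2.2 J hJK I hIJ
end
end
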